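/- Swap lemma for Ψ(t) = 1 − t (from the proof of Theorem 4.3): let Ψ(t) = 1 − t, let i, j ∈ [n] satisfy p_i ≥ p_j and h_j ≥ h_i, and let h̄ ∈ ℝ^{Ȳ} be obtained from h by exchanging coordinates i and j (leaving all other coordinates unchanged). Then C_Ψ(h) − C_Ψ(h̄) = (p_i − p_j)·(exp(h_j) − exp(h_i)) / Σ_{y'∈Ȳ} exp(h_{y'}) ≥ 0; in particular C_Ψ(h) ≥ C_Ψ(h̄). -/
import Mathlib


open Real

/-- Softmax of a score vector. -/
noncomputable def smax {m : ℕ} (v : Fin m → ℝ) (y : Fin m) : ℝ :=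
  Real.exp (v y) / ∑ y' : Fin m, Real.exp (v y')

/-- Conditional RL2D error `C_Ψ(h) = Σ_y [ q_y Ψ(s_y) + (p_y − q_y) Ψ(s_y + s_{n+1}) ]`
with `q_y = p_y c_y`; label `Fin.last n` is the deferral label. -/
noncomputable def condC {n : ℕ} (Ψ : ℝ → ℝ) (p c : Fin n → ℝ) (v : Fin (n + 1) → ℝ) : ℝ :=
  ∑ y : Fin n, (p y * c y * Ψ (smax v y.castSucc)
    + (p y - p y * c y) * Ψ (smax v y.castSucc + smax v (Fin.last n)))

/-- Conditional regret `ΔC_Ψ(h) = C_Ψ(h) − inf_{h'} C_Ψ(h')`. -/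
noncomputable def condRegret {n : ℕ} (Ψ : ℝ → ℝ) (p c : Fin n → ℝ)
    (v : Fin (n + 1) → ℝ) : ℝ :=
  condC Ψ p c v - ⨅ v' : Fin (n + 1) → ℝ, condC Ψ p c v'

/-- `P(k)`: `p_k` for `k ∈ [n]` and `p_{n+1} = Σ_y p_y (1 − c_y)` for the deferral label. -/
noncomputable def Pfull {n : ℕ} (p c : Fin n → ℝ) (k : Fin (n + 1)) : ℝ :=
  if h : k = Fin.last n then ∑ y : Fin n, p y * (1 - c y) else p (k.castPred h)

/-- Conditional deferral regret `ΔC_def = max{max_y p_y, p_{n+1}} − P(k)`. -/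
noncomputable def defRegret {n : ℕ} (p c : Fin n → ℝ) (k : Fin (n + 1)) : ℝ :=
  max (⨆ y : Fin n, p y) (∑ y : Fin n, p y * (1 - c y)) - Pfull p c k

/-- swap lemma for Ψ(t) = 1 − t (from the proof of Theorem 4.3):
if p_i ≥ p_j and h_j ≥ h_i, and h̄ exchanges coordinates i and j of h, then
C_Ψ(h) − C_Ψ(h̄) = (p_i − p_j)(e^{h_j} − e^{h_i}) / Σ_{y'} e^{h_{y'}} ≥ 0, hence
C_Ψ(h̄) ≤ C_Ψ(h). -/
theorem swap_lemma_one_sub {n : ℕ} (hn : 2 ≤ n) (p c : Fin n → ℝ)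
    (hp0 : ∀ y, 0 ≤ p y) (hp1 : ∑ y : Fin n, p y = 1)
    (hc : ∀ y, c y ∈ Set.Icc (0 : ℝ) 1)
    (i j : Fin n) (v : Fin (n + 1) → ℝ)
    (hpij : p j ≤ p i) (hvij : v i.castSucc ≤ v j.castSucc)
    (vbar : Fin (n + 1) → ℝ)
    (hbar : ∀ k : Fin (n + 1), vbar k =
      if k = i.castSucc then v j.castSucc
      else if k = j.castSucc then v i.castSucc else v k) :
    condC (fun t => 1 - t) p c v - condC (fun t => 1 - t) p c vbar =
        (p i - p j) * (Real.exp (v j.castSucc) - Real.exp (v i.castSucc)) /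
          ∑ y' : Fin (n + 1), Real.exp (v y') ∧
      0 ≤ (p i - p j) * (Real.exp (v j.castSucc) - Real.exp (v i.castSucc)) /
          ∑ y' : Fin (n + 1), Real.exp (v y') ∧
      condC (fun t => 1 - t) p c vbar ≤ condC (fun t => 1 - t) p c v := by

  set S := ∑ y' : Fin (n + 1), Real.exp (v y') with hSdef
  have hS : 0 < S := Finset.sum_pos (fun y _ => Real.exp_pos _) Finset.univ_nonempty
  have hSbar : ∑ y' : Fin (n + 1), Real.exp (vbar y') = S := by
    have hswap : ∀ k, vbar k = v (Equiv.swap i.castSucc j.castSucc k) := by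
      intro k
      rw [hbar k, Equiv.swap_apply_def]
      split_ifs <;> rfl
    rw [hSdef]
    calc ∑ y' : Fin (n + 1), Real.exp (vbar y')
        = ∑ y' : Fin (n + 1), Real.exp (v (Equiv.swap i.castSucc j.castSucc y')) :=
          Finset.sum_congr rfl fun y _ => by rw [hswap]
      _ = ∑ y' : Fin (n + 1), Real.exp (v y') :=
          Equiv.sum_comp (Equiv.swap i.castSucc j.castSucc) (fun k => Real.exp (v k))
  have hsm : ∀ k, smax vbar k = Real.exp (vbar k) / S := by
    intro k; unfold smax; rw [hSbar]
  have hsv : ∀ k, smax v k = Real.exp (v k) / S := by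
    intro k; unfold smax; rw [← hSdef]
  have hlast : vbar (Fin.last n) = v (Fin.last n) := by
    rw [hbar, if_neg (Fin.castSucc_lt_last i).ne', if_neg (Fin.castSucc_lt_last j).ne']
  have hsl : smax vbar (Fin.last n) = smax v (Fin.last n) := by
    rw [hsm, hsv, hlast]
  have hkey : ∀ w : Fin (n + 1) → ℝ,
      condC (fun t => 1 - t) p c w =
        (∑ y : Fin n, p y) - (∑ y : Fin n, p y * smax w y.castSucc)
          - (∑ y : Fin n, (p y - p y * c y)) * smax w (Fin.last n) := by
    intro w
    simp only [condC]
    rw [Finset.sum_mul, ← Finset.sum_sub_distrib, ← Finset.sum_sub_distrib]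
    exact Finset.sum_congr rfl fun y _ => by ring
  have hdiff : condC (fun t => 1 - t) p c v - condC (fun t => 1 - t) p c vbar
      = ∑ y : Fin n, p y * (smax vbar y.castSucc - smax v y.castSucc) := by
    have h1 : ∑ y : Fin n, p y * (smax vbar y.castSucc - smax v y.castSucc)
        = (∑ y : Fin n, p y * smax vbar y.castSucc)
          - ∑ y : Fin n, p y * smax v y.castSucc := by
      rw [← Finset.sum_sub_distrib]
      exact Finset.sum_congr rfl fun y _ => by ring
    rw [hkey v, hkey vbar, h1, hsl]
    ring
  have hsum : ∑ y : Fin n, p y * (smax vbar y.castSucc - smax v y.castSucc)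
      = (p i - p j) * (Real.exp (v j.castSucc) - Real.exp (v i.castSucc)) / S := by
    rcases eq_or_ne i j with rfl | hij
    · have hv : vbar = v := by
        funext k
        rw [hbar]
        split_ifs with h1
        · exact (congrArg v h1).symm
        · rfl
      rw [hv]
      simp
    · have hijc : i.castSucc ≠ j.castSucc := fun h => hij (Fin.castSucc_injective n h)
      have hvi : vbar i.castSucc = v j.castSucc := by rw [hbar, if_pos rfl]
      have hvj : vbar j.castSucc = v i.castSucc := by
        rw [hbar, if_neg hijc.symm, if_pos rfl]
      have hzero : ∀ y ∈ Finset.univ, y ∉ ({i, j} : Finset (Fin n)) →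
          p y * (smax vbar y.castSucc - smax v y.castSucc) = 0 := by
        intro y _ hy
        simp only [Finset.mem_insert, Finset.mem_singleton, not_or] at hy
        have h1 : ¬ y.castSucc = i.castSucc := fun h => hy.1 (Fin.castSucc_injective n h)
        have h2 : ¬ y.castSucc = j.castSucc := fun h => hy.2 (Fin.castSucc_injective n h)
        have : vbar y.castSucc = v y.castSucc := by rw [hbar, if_neg h1, if_neg h2]
        rw [hsm, hsv, this, sub_self, mul_zero]
      rw [← Finset.sum_subset (Finset.subset_univ ({i, j} : Finset (Fin n))) hzero,
        Finset.sum_pair hij, hsm, hsm, hsv, hsv, hvi, hvj]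
      ring
  have heq : condC (fun t => 1 - t) p c v - condC (fun t => 1 - t) p c vbar
      = (p i - p j) * (Real.exp (v j.castSucc) - Real.exp (v i.castSucc)) / S := by
    rw [hdiff, hsum]
  have hnn : 0 ≤ (p i - p j) * (Real.exp (v j.castSucc) - Real.exp (v i.castSucc)) / S :=
    div_nonneg (mul_nonneg (sub_nonneg.2 hpij)
      (sub_nonneg.2 (Real.exp_le_exp.2 hvij))) hS.le
  exact ⟨heq, hnn, by linarith⟩
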